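/- Consider a finite MDP with finite nonempty state set S, finite nonempty action set A, transition probabilities p : S × A × S → ℝ with p(s'|s,a) ≥ 0 and Σ_{s'} p(s'|s,a) = 1, reward r : S × A → ℝ, discount γ ∈ [0,1), and behavior policy μ : S × A → ℝ with μ(a|s) ≥ 0 and Σ_a μ(a|s) = 1. For every τ ∈ (0,1) there exists a unique function V_τ : S → ℝ such that for every state s, V_τ(s) is the τ-expectile, under the weights μ(·|s), of the values a ↦ r(s,a) + γ·Σ_{s'} p(s'|s,a)·V_τ(s'). -/
import Mathlib


open Finset

/-- `m` is the `τ`-expectile of the values `f` under the weights `w`. -/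
def IsExpectile {A : Type*} [Fintype A] (τ : ℝ) (w f : A → ℝ) (m : ℝ) : Prop :=
  τ * ∑ a, w a * max (f a - m) 0 = (1 - τ) * ∑ a, w a * max (m - f a) 0

/-- `V` is a `τ`-expectile value function for the finite MDP `(p, r, γ)` and behavior
policy `μ`: for every state `s`, `V s` is the `τ`-expectile, under the weights
`μ s`, of the one-step values `a ↦ r s a + γ · Σ_{s'} p s a s' · V s'`. -/
def IsExpectileValueFn {S A : Type*} [Fintype S] [Fintype A]
    (p : S → A → S → ℝ) (r : S → A → ℝ) (γ : ℝ) (μ : S → A → ℝ)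
    (τ : ℝ) (V : S → ℝ) : Prop :=
  ∀ s, IsExpectile τ (μ s) (fun a => r s a + γ * ∑ s', p s a s' * V s') (V s)

noncomputable section ExpectileAux

/-- The "tilted loss derivative" function. -/
def expPhi (τ x : ℝ) : ℝ := τ * max x 0 - (1 - τ) * max (-x) 0

lemma expPhi_strictMono {τ : ℝ} (hτ : τ ∈ Set.Ioo (0:ℝ) 1) : StrictMono (expPhi τ) := by
  obtain ⟨h0, h1⟩ := hτ
  intro x y hxy
  unfold expPhi
  rcases le_total x 0 with hx | hx <;> rcases le_total y 0 with hy | hy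
  · rw [max_eq_right hx, max_eq_left (by linarith), max_eq_right hy, max_eq_left (by linarith)]
    nlinarith
  · rw [max_eq_right hx, max_eq_left (by linarith), max_eq_left hy, max_eq_right (by linarith)]
    rcases lt_or_eq_of_le hx with hx' | hx'
    · nlinarith [mul_nonneg h0.le hy, mul_pos (show (0:ℝ) < 1 - τ by linarith)
        (show (0:ℝ) < -x by linarith)]
    · nlinarith [mul_pos h0 (show (0:ℝ) < y by rw [← hx']; exact hxy)]
  · linarith
  · rw [max_eq_left hx, max_eq_right (by linarith), max_eq_left hy, max_eq_right (by linarith)]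
    nlinarith

lemma expPhi_zero (τ : ℝ) : expPhi τ 0 = 0 := by simp [expPhi]

lemma expPhi_continuous (τ : ℝ) : Continuous (expPhi τ) := by
  unfold expPhi
  fun_prop

lemma exists_pos_weight {A : Type*} [Fintype A] {w : A → ℝ} (hw : ∀ a, 0 ≤ w a)
    (hws : ∑ a, w a = 1) : ∃ a, 0 < w a := by
  by_contra h
  push_neg at h
  have : ∑ a, w a ≤ 0 := Finset.sum_nonpos fun a _ => h a
  linarith

lemma expectile_sum_strictAnti {A : Type*} [Fintype A] {τ : ℝ} (hτ : τ ∈ Set.Ioo (0:ℝ) 1)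
    {w : A → ℝ} (hw : ∀ a, 0 ≤ w a) (hws : ∑ a, w a = 1) (f : A → ℝ) :
    StrictAnti (fun m => ∑ a, w a * expPhi τ (f a - m)) := by
  intro m1 m2 h12
  obtain ⟨a0, ha0⟩ := exists_pos_weight hw hws
  apply Finset.sum_lt_sum
  · intro a _
    exact mul_le_mul_of_nonneg_left ((expPhi_strictMono hτ).monotone (by linarith)) (hw a)
  · exact ⟨a0, Finset.mem_univ a0,
      mul_lt_mul_of_pos_left (expPhi_strictMono hτ (by linarith)) ha0⟩

lemma expectile_exists_unique {A : Type*} [Fintype A] [Nonempty A] {τ : ℝ}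
    (hτ : τ ∈ Set.Ioo (0:ℝ) 1) (w : A → ℝ) (hw : ∀ a, 0 ≤ w a) (hws : ∑ a, w a = 1)
    (f : A → ℝ) : ∃! m, ∑ a, w a * expPhi τ (f a - m) = 0 := by
  set G : ℝ → ℝ := fun m => ∑ a, w a * expPhi τ (f a - m) with hG
  have hGcont : Continuous G := by
    apply continuous_finset_sum
    intro a _
    exact continuous_const.mul ((expPhi_continuous τ).comp (continuous_const.sub continuous_id))
  set lo := Finset.univ.inf' Finset.univ_nonempty f with hlo
  set hi := Finset.univ.sup' Finset.univ_nonempty f with hhi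
  have hlohi : lo ≤ hi := by
    obtain ⟨a⟩ := ‹Nonempty A›
    exact le_trans (Finset.inf'_le f (Finset.mem_univ a)) (Finset.le_sup' f (Finset.mem_univ a))
  have hGlo : 0 ≤ G lo := by
    apply Finset.sum_nonneg
    intro a _
    apply mul_nonneg (hw a)
    have : (0:ℝ) ≤ f a - lo := by
      have := Finset.inf'_le f (Finset.mem_univ a)
      linarith
    calc (0:ℝ) = expPhi τ 0 := (expPhi_zero τ).symm
    _ ≤ expPhi τ (f a - lo) := (expPhi_strictMono hτ).monotone this
  have hGhi : G hi ≤ 0 := by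
    apply Finset.sum_nonpos
    intro a _
    apply mul_nonpos_of_nonneg_of_nonpos (hw a)
    have : f a - hi ≤ 0 := by
      have := Finset.le_sup' f (Finset.mem_univ a)
      linarith
    calc expPhi τ (f a - hi) ≤ expPhi τ 0 := (expPhi_strictMono hτ).monotone this
    _ = 0 := expPhi_zero τ
  have : (0:ℝ) ∈ G '' Set.Icc lo hi := by
    apply intermediate_value_Icc' hlohi hGcont.continuousOn
    exact ⟨hGhi, hGlo⟩
  obtain ⟨m, _, hm⟩ := this
  refine ⟨m, hm, fun y hy => ?_⟩
  exact (expectile_sum_strictAnti hτ hw hws f).injective (hy.trans hm.symm)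

lemma expectile_le_add {A : Type*} [Fintype A] {τ : ℝ} (hτ : τ ∈ Set.Ioo (0:ℝ) 1)
    {w : A → ℝ} (hw : ∀ a, 0 ≤ w a) (hws : ∑ a, w a = 1) {f f' : A → ℝ} {m m' d : ℝ}
    (hm : ∑ a, w a * expPhi τ (f a - m) = 0) (hm' : ∑ a, w a * expPhi τ (f' a - m') = 0)
    (hd : ∀ a, f a - f' a ≤ d) : m ≤ m' + d := by
  by_contra h
  push_neg at h
  obtain ⟨a0, ha0⟩ := exists_pos_weight hw hws
  have key : ∀ a, f a - m < f' a - m' := by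
    intro a
    have := hd a
    linarith
  have : (∑ a, w a * expPhi τ (f a - m)) < ∑ a, w a * expPhi τ (f' a - m') := by
    apply Finset.sum_lt_sum
    · intro a _
      exact mul_le_mul_of_nonneg_left ((expPhi_strictMono hτ).monotone (key a).le) (hw a)
    · exact ⟨a0, Finset.mem_univ a0,
        mul_lt_mul_of_pos_left (expPhi_strictMono hτ (key a0)) ha0⟩
  rw [hm, hm'] at this
  exact lt_irrefl 0 this

lemma expectile_abs_le {A : Type*} [Fintype A] {τ : ℝ} (hτ : τ ∈ Set.Ioo (0:ℝ) 1)
    {w : A → ℝ} (hw : ∀ a, 0 ≤ w a) (hws : ∑ a, w a = 1) {f f' : A → ℝ} {m m' d : ℝ}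
    (hm : ∑ a, w a * expPhi τ (f a - m) = 0) (hm' : ∑ a, w a * expPhi τ (f' a - m') = 0)
    (hd : ∀ a, |f a - f' a| ≤ d) : |m - m'| ≤ d := by
  rw [abs_sub_le_iff]
  constructor
  · have := expectile_le_add hτ hw hws hm hm' (fun a => (abs_le.mp (hd a)).2)
    linarith
  · have := expectile_le_add hτ hw hws hm' hm
      (fun a => by have := (abs_le.mp (hd a)).1; linarith)
    linarith

lemma isExpectile_iff {A : Type*} [Fintype A] (τ : ℝ) (w f : A → ℝ) (m : ℝ) :
    IsExpectile τ w f m ↔ ∑ a, w a * expPhi τ (f a - m) = 0 := by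
  unfold IsExpectile
  have : ∑ a, w a * expPhi τ (f a - m)
      = τ * ∑ a, w a * max (f a - m) 0 - (1 - τ) * ∑ a, w a * max (m - f a) 0 := by
    rw [Finset.mul_sum, Finset.mul_sum, ← Finset.sum_sub_distrib]
    apply Finset.sum_congr rfl
    intro a _
    rw [expPhi, neg_sub]
    ring
  rw [this, sub_eq_zero]

end ExpectileAux

/-- In a finite MDP with behavior policy `μ`, for every `τ ∈ (0,1)`
there is a unique `τ`-expectile value function `V_τ`. -/
theorem expectile_value_function_exists_unique
    {S A : Type*} [Fintype S] [Nonempty S] [Fintype A] [Nonempty A]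
    (p : S → A → S → ℝ) (hp : ∀ s a s', 0 ≤ p s a s')
    (hps : ∀ s a, ∑ s', p s a s' = 1)
    (r : S → A → ℝ) (γ : ℝ) (hγ : γ ∈ Set.Ico (0 : ℝ) 1)
    (μ : S → A → ℝ) (hμ : ∀ s a, 0 ≤ μ s a) (hμs : ∀ s, ∑ a, μ s a = 1)
    (τ : ℝ) (hτ : τ ∈ Set.Ioo (0 : ℝ) 1) :
    ∃! V : S → ℝ, IsExpectileValueFn p r γ μ τ V := by
  classical
  obtain ⟨hγ0, hγ1⟩ := hγ
  set Q : (S → ℝ) → S → A → ℝ := fun V s a => r s a + γ * ∑ s', p s a s' * V s' with hQ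
  have key : ∀ (V : S → ℝ) (s : S), ∃! m, ∑ a, μ s a * expPhi τ (Q V s a - m) = 0 :=
    fun V s => expectile_exists_unique hτ (μ s) (hμ s) (hμs s) (Q V s)
  set T : (S → ℝ) → S → ℝ := fun V s => (key V s).choose with hT
  have hTfix : ∀ V s, ∑ a, μ s a * expPhi τ (Q V s a - T V s) = 0 :=
    fun V s => (key V s).choose_spec.1
  have hchar : ∀ V : S → ℝ, IsExpectileValueFn p r γ μ τ V ↔ T V = V := by
    intro V
    constructor
    · intro h
      funext s
      exact ((key V s).choose_spec.2 (V s) ((isExpectile_iff τ (μ s) (Q V s) (V s)).mp (h s))).symm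
    · intro h s
      rw [isExpectile_iff]
      have := hTfix V s
      rw [h] at this
      exact this
  have hlip : LipschitzWith ⟨γ, hγ0⟩ T := by
    apply LipschitzWith.of_dist_le_mul
    intro V V'
    show dist (T V) (T V') ≤ γ * dist V V'
    rw [dist_pi_le_iff (mul_nonneg hγ0 dist_nonneg)]
    intro s
    rw [Real.dist_eq]
    apply expectile_abs_le hτ (hμ s) (hμs s) (hTfix V s) (hTfix V' s)
    intro a
    have hQd : Q V s a - Q V' s a = γ * ∑ s', p s a s' * (V s' - V' s') := by
      simp only [hQ, Finset.mul_sum, mul_sub, Finset.sum_sub_distrib]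
      ring
    rw [hQd, abs_mul, abs_of_nonneg hγ0]
    apply mul_le_mul_of_nonneg_left _ hγ0
    calc |∑ s', p s a s' * (V s' - V' s')| ≤ ∑ s', |p s a s' * (V s' - V' s')| :=
          Finset.abs_sum_le_sum_abs _ _
    _ ≤ ∑ s', p s a s' * dist V V' := by
        apply Finset.sum_le_sum
        intro s' _
        rw [abs_mul, abs_of_nonneg (hp s a s')]
        apply mul_le_mul_of_nonneg_left _ (hp s a s')
        have := dist_le_pi_dist V V' s'
        rwa [Real.dist_eq] at this
    _ = dist V V' := by rw [← Finset.sum_mul, hps s a, one_mul]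
  have hc : ContractingWith ⟨γ, hγ0⟩ T := ⟨by exact_mod_cast hγ1, hlip⟩
  refine ⟨ContractingWith.fixedPoint T hc, (hchar _).mpr hc.fixedPoint_isFixedPt, ?_⟩
  intro V hV
  exact hc.fixedPoint_unique ((hchar V).mp hV)
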